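/- If v ∈ H satisfies 𝐈v = v, Y₊v = 0 and Y₋v = 0, then Tv = −(1/2)v when 𝐉v = v and Tv = (1/2)v when 𝐉v = −v. If v satisfies 𝐈v = v, Y₊v = v and Y₋v = v, then Tv = v when 𝐉v = v and Tv = −v when 𝐉v = −v. If v satisfies 𝐈v = −v, Y₊v = 0 and Y₋v = 0, then Tv = 0 and T*v = 0. -/

import Mathlib

noncomputable section

abbrev SL2Z := Matrix.SpecialLinearGroup (Fin 2) ℤ

def Lmat : SL2Z := ⟨!![1, 1; 0, 1], by decide⟩
def Rmat : SL2Z := ⟨!![1, 0; 1, 1], by decide⟩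
def Jmat : SL2Z := ⟨!![0, 1; -1, 0], by decide⟩
def Imat : SL2Z := ⟨!![-1, 0; 0, -1], by decide⟩

variable {H : Type*} [NormedAddCommGroup H] [InnerProductSpace ℂ H] [CompleteSpace H]

/-- The bounded operator associated to a group element by the unitary representation. -/
def rop (ρ : SL2Z →* unitary (H →L[ℂ] H)) (g : SL2Z) : H →L[ℂ] H := (ρ g : H →L[ℂ] H)

/-- The Markov operator T = (𝐋 + 𝐑)/2. -/
def opT (ρ : SL2Z →* unitary (H →L[ℂ] H)) : H →L[ℂ] H := (2 : ℂ)⁻¹ • (rop ρ Lmat + rop ρ Rmat)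

/-- Y₊ = (1/3)((3/2)·id − (1/2)𝐈 + 𝐑⁻¹𝐋 + 𝐋⁻¹𝐑). -/
def opYp (ρ : SL2Z →* unitary (H →L[ℂ] H)) : H →L[ℂ] H :=
  (3 : ℂ)⁻¹ • ((3 / 2 : ℂ) • (1 : H →L[ℂ] H) - (2 : ℂ)⁻¹ • rop ρ Imat
    + rop ρ Rmat⁻¹ * rop ρ Lmat + rop ρ Lmat⁻¹ * rop ρ Rmat)

/-- Y₋ = 𝐉* Y₊ 𝐉. -/
def opYm (ρ : SL2Z →* unitary (H →L[ℂ] H)) : H →L[ℂ] H :=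
  ContinuousLinearMap.adjoint (rop ρ Jmat) * opYp ρ * rop ρ Jmat

/-! Since `-1` is central and `L = (R L⁻¹) J`, `R = (L R⁻¹) (-1) J` in `SL(2, ℤ)`, on a vector
with `𝐈v = v`, `𝐉v = εv` one gets `2Tv = ε (𝐋𝐑⁻¹ + 𝐑𝐋⁻¹) v = ε (3Y₋v - v)`.
For the last claim, `4T*T = 3Y₊ + (1 + 𝐈)/2` and `4TT* = 3Y₋ + (1 + 𝐈)/2`, so if `𝐈v = -v` and
`Y₊v = Y₋v = 0` then `T*Tv = TT*v = 0`, hence `Tv = T*v = 0`. -/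

open ContinuousLinearMap

theorem ContinuousLinearMap.apply_eq_zero_of_adjoint_mul_self_apply_eq_zero
    {𝕜 E : Type*} [RCLike 𝕜] [NormedAddCommGroup E] [InnerProductSpace 𝕜 E] [CompleteSpace E]
    (A : E →L[𝕜] E) {v : E} (h : (adjoint A * A) v = 0) : A v = 0 := by
  have hv : v ∈ (adjoint A ∘L A).ker := h
  rwa [ker_adjoint_comp_self] at hv

section

variable (ρ : SL2Z →* unitary (H →L[ℂ] H))

lemma rop_mul (g h : SL2Z) : rop ρ (g * h) = rop ρ g * rop ρ h := by
  simp [rop]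

lemma rop_one : rop ρ 1 = 1 := by
  simp [rop]

lemma adjoint_rop (g : SL2Z) : adjoint (rop ρ g) = rop ρ g⁻¹ := by
  rw [← star_eq_adjoint, rop, rop, map_inv, ← Unitary.coe_star, Unitary.star_eq_inv]

lemma rop_inv_mul_self (g : SL2Z) : rop ρ g⁻¹ * rop ρ g = 1 := by
  rw [← rop_mul, inv_mul_cancel, rop_one]

lemma rop_mul_inv_self (g : SL2Z) : rop ρ g * rop ρ g⁻¹ = 1 := by
  rw [← rop_mul, mul_inv_cancel, rop_one]

lemma adjoint_opT : adjoint (opT ρ) = (2 : ℂ)⁻¹ • (rop ρ Lmat⁻¹ + rop ρ Rmat⁻¹) := by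
  rw [opT, map_smulₛₗ, map_add, adjoint_rop, adjoint_rop, map_inv₀, map_ofNat]

lemma opYm_eq : opYm ρ = (3 : ℂ)⁻¹ • ((3 / 2 : ℂ) • (1 : H →L[ℂ] H) - (2 : ℂ)⁻¹ • rop ρ Imat
    + rop ρ (Lmat * Rmat⁻¹) + rop ρ (Rmat * Lmat⁻¹)) := by
  have hI : Jmat⁻¹ * Imat * Jmat = Imat := Subtype.ext (by decide)
  have hLR : Jmat⁻¹ * (Rmat⁻¹ * Lmat) * Jmat = Lmat * Rmat⁻¹ := Subtype.ext (by decide)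
  have hRL : Jmat⁻¹ * (Lmat⁻¹ * Rmat) * Jmat = Rmat * Lmat⁻¹ := Subtype.ext (by decide)
  rw [opYm, opYp, adjoint_rop]
  simp only [mul_add, add_mul, mul_sub, sub_mul, mul_smul_comm, smul_mul_assoc, mul_one,
    ← rop_mul, hI, hLR, hRL, inv_mul_cancel, rop_one]

lemma four_adjoint_opT_mul_opT :
    (4 : ℂ) • (adjoint (opT ρ) * opT ρ) = (3 : ℂ) • opYp ρ + (2 : ℂ)⁻¹ • (1 + rop ρ Imat) := by
  rw [adjoint_opT, opT, opYp]
  simp only [mul_add, add_mul, mul_smul_comm, smul_mul_assoc, rop_inv_mul_self]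
  module

lemma four_opT_mul_adjoint_opT :
    (4 : ℂ) • (opT ρ * adjoint (opT ρ)) = (3 : ℂ) • opYm ρ + (2 : ℂ)⁻¹ • (1 + rop ρ Imat) := by
  rw [adjoint_opT, opT, opYm_eq]
  simp only [rop_mul, mul_add, add_mul, mul_smul_comm, smul_mul_assoc, rop_mul_inv_self]
  module

variable {ρ} {v : H}

lemma opT_apply_of_rop_Jmat_apply_eq_smul (hI : rop ρ Imat v = v) {ε : ℂ}
    (hJ : rop ρ Jmat v = ε • v) : opT ρ v = ε • ((3 / 2 : ℂ) • opYm ρ v - (2 : ℂ)⁻¹ • v) := by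
  have hL : rop ρ Lmat = rop ρ (Rmat * Lmat⁻¹) * rop ρ Jmat := by
    rw [← rop_mul]; congr 1; exact Subtype.ext (by decide)
  have hR : rop ρ Rmat = rop ρ (Lmat * Rmat⁻¹) * rop ρ Imat * rop ρ Jmat := by
    rw [← rop_mul, ← rop_mul]; congr 1; exact Subtype.ext (by decide)
  rw [opT, opYm_eq, hL, hR]
  simp only [smul_apply, add_apply, sub_apply, one_apply_eq_self, mul_apply_eq_comp, hJ,
    map_smul, hI]
  module

lemma opT_apply_eq_zero (hI : rop ρ Imat v = -v) (hY : opYp ρ v = 0) : opT ρ v = 0 := by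
  apply apply_eq_zero_of_adjoint_mul_self_apply_eq_zero
  have h := congrArg (· v) (four_adjoint_opT_mul_opT ρ)
  simp only [smul_apply, add_apply, one_apply_eq_self, hI, hY] at h
  simpa using h

lemma adjoint_opT_apply_eq_zero (hI : rop ρ Imat v = -v) (hY : opYm ρ v = 0) :
    adjoint (opT ρ) v = 0 := by
  apply apply_eq_zero_of_adjoint_mul_self_apply_eq_zero
  have h := congrArg (· v) (four_opT_mul_adjoint_opT ρ)
  simp only [smul_apply, add_apply, one_apply_eq_self, hI, hY] at h
  simpa using h

end

/-- On the joint kernel of Y₊, Y₋ inside H⁺ the operator T acts as ∓(1/2) according to the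
𝐉-eigenvalue ±1; on the joint range inside H⁺ it acts as ±1; and on the joint kernel inside
H⁻ both T and T* vanish. -/
theorem T_on_kernel_and_range_subspaces (ρ : SL2Z →* unitary (H →L[ℂ] H)) (v : H) :
    ((rop ρ Imat v = v ∧ opYp ρ v = 0 ∧ opYm ρ v = 0) →
      ((rop ρ Jmat v = v → opT ρ v = (-(1 / 2) : ℂ) • v) ∧
       (rop ρ Jmat v = -v → opT ρ v = ((1 / 2) : ℂ) • v))) ∧
    ((rop ρ Imat v = v ∧ opYp ρ v = v ∧ opYm ρ v = v) →
      ((rop ρ Jmat v = v → opT ρ v = v) ∧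
       (rop ρ Jmat v = -v → opT ρ v = -v))) ∧
    ((rop ρ Imat v = -v ∧ opYp ρ v = 0 ∧ opYm ρ v = 0) →
      (opT ρ v = 0 ∧ ContinuousLinearMap.adjoint (opT ρ) v = 0)) := by
  have hT := fun (hI : rop ρ Imat v = v) (ε : ℂ) (hJ : rop ρ Jmat v = ε • v) ↦
    opT_apply_of_rop_Jmat_apply_eq_smul hI hJ
  refine ⟨fun ⟨hI, _, hY⟩ ↦ ⟨fun hJ ↦ ?_, fun hJ ↦ ?_⟩,
    fun ⟨hI, _, hY⟩ ↦ ⟨fun hJ ↦ ?_, fun hJ ↦ ?_⟩,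
    fun ⟨hI, hYp, hYm⟩ ↦ ⟨opT_apply_eq_zero hI hYp, adjoint_opT_apply_eq_zero hI hYm⟩⟩
  · rw [hT hI 1 (by rw [hJ, one_smul]), hY]; module
  · rw [hT hI (-1) (by rw [hJ, neg_one_smul]), hY]; module
  · rw [hT hI 1 (by rw [hJ, one_smul]), hY]; module
  · rw [hT hI (-1) (by rw [hJ, neg_one_smul]), hY]; module
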